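/- arXiv:2605.28138 — 7 statements merged into one kernel-verified Lean document; each statement's English description precedes it below -/
import Mathlib

section
/- Let X be a finite set and F a family of subsets of X. If each element x of X is assigned a weight w(x) independently and uniformly at random from {1,...,M}, then with probability at least 1 - (|F| choose 2)/M, all sets in F have pairwise distinct total weights, i.e., for all distinct S1, S2 in F, the sum of w over S1 differs from the sum of w over S2. -/
/-!
Two distinct sets `S₁ ≠ S₂` differ in some element `x`, say `x ∈ S₁ \ S₂`. Once the weights off `x`
are fixed, `w(S₁) = w(S₂)` pins down `w x` to at most one value, so this collision has
probability at most `1/M`. A union bound over the `(|F| choose 2)` unordered pairs of `F`,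
indexed by `Sym2`, finishes the proof.
-/

open Finset Function

section Collision

variable {α β : Type*} [Fintype α] [DecidableEq α]

theorem card_mul_card_filter_le_of_subsingleton_update (t : α → Finset β)
    (P : (α → β) → Prop) [DecidablePred P] (x : α)
    (hP : ∀ w, {v | P (update w x v)}.Subsingleton) :
    #(t x) * #{w ∈ Fintype.piFinset t | P w} ≤ #(Fintype.piFinset t) := by
  rw [mul_comm, ← card_product]
  refine card_le_card_of_injOn (fun p => update p.1 x p.2) ?_ ?_
  · rintro ⟨w, v⟩ hwv
    simp only [coe_product, Set.mem_prod, mem_coe, mem_filter, Fintype.mem_piFinset] at hwv ⊢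
    intro y
    rcases eq_or_ne y x with rfl | hy
    · simpa using hwv.2
    · simpa [update_of_ne hy] using hwv.1.1 y
  · rintro ⟨w, v⟩ hwv ⟨w', v'⟩ hwv' hupd
    simp only [coe_product, Set.mem_prod, mem_coe, mem_filter] at hwv hwv' hupd
    have hw' : update w x (w' x) = w' := by
      simpa using congrArg (update · x (w' x)) hupd
    have hwx : w x = w' x :=
      hP w (by simpa using hwv.1.2) (by simpa [hw'] using hwv'.1.2)
    have hv : v = v' := by simpa using congrFun hupd x
    rw [← hw', ← hwx, update_eq_self, hv]

theorem card_mul_card_filter_sum_eq_le [AddCancelCommMonoid β] [DecidableEq β] (s : Finset β)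
    {S₁ S₂ : Finset α} (hS : S₁ ≠ S₂) :
    #s * #{w ∈ Fintype.piFinset fun _ : α => s | ∑ x ∈ S₁, w x = ∑ x ∈ S₂, w x} ≤
      #(Fintype.piFinset fun _ : α => s) := by
  wlog hx : ∃ x ∈ S₁, x ∉ S₂ generalizing S₁ S₂
  · have hsub : S₁ ⊆ S₂ := not_not.1 fun h => hx (not_subset.1 h)
    obtain ⟨x, hx₂, hx₁⟩ := not_subset.1 fun h => hS (hsub.antisymm h)
    simpa only [eq_comm] using this hS.symm ⟨x, hx₂, hx₁⟩
  obtain ⟨x, hx₁, hx₂⟩ := hx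
  refine card_mul_card_filter_le_of_subsingleton_update (fun _ => s)
    (fun w : α → β => ∑ x ∈ S₁, w x = ∑ x ∈ S₂, w x) x fun w v hv v' hv' => ?_
  simp only [Set.mem_ofPred_eq, sum_update_of_mem hx₁, sum_update_of_notMem hx₂] at hv hv'
  exact add_right_cancel (hv.trans hv'.symm)

end Collision

theorem card_biUnion_offDiag_le_choose_two_mul {ι γ : Type*} [DecidableEq ι] [DecidableEq γ]
    (F : Finset ι) (E : ι → ι → Finset γ) (hE : ∀ i j, E i j = E j i) (t : ℝ)
    (ht : ∀ i ∈ F, ∀ j ∈ F, i ≠ j → (#(E i j) : ℝ) ≤ t) :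
    (#(F.offDiag.biUnion fun p => E p.1 p.2) : ℝ) ≤ (#F).choose 2 * t := by
  let E' : Sym2 ι → Finset γ := Sym2.lift ⟨E, hE⟩
  have hunion : F.offDiag.biUnion (fun p => E p.1 p.2) =
      (F.offDiag.image Sym2.mk.uncurry).biUnion E' := by
    rw [image_biUnion]
    rfl
  calc (#(F.offDiag.biUnion fun p => E p.1 p.2) : ℝ)
      ≤ ∑ z ∈ F.offDiag.image Sym2.mk.uncurry, (#(E' z) : ℝ) := by
        rw [hunion]
        exact_mod_cast card_biUnion_le
    _ ≤ ∑ _z ∈ F.offDiag.image Sym2.mk.uncurry, t := by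
        refine sum_le_sum fun z hz => ?_
        obtain ⟨⟨i, j⟩, hij, rfl⟩ := mem_image.1 hz
        rw [mem_offDiag] at hij
        exact ht i hij.1 j hij.2.1 hij.2.2
    _ = (#F).choose 2 * t := by
        rw [sum_const, Sym2.card_image_offDiag, nsmul_eq_mul]

theorem card_sub_choose_two_mul_le_card_filter_pairwise_ne {γ ι β : Type*} [DecidableEq γ]
    [DecidableEq ι] [DecidableEq β] (Ω : Finset γ) (F : Finset ι) (f : γ → ι → β) (t : ℝ)
    (ht : ∀ i ∈ F, ∀ j ∈ F, i ≠ j → (#{w ∈ Ω | f w i = f w j} : ℝ) ≤ t) :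
    (#Ω : ℝ) - (#F).choose 2 * t ≤ #{w ∈ Ω | ∀ i ∈ F, ∀ j ∈ F, i ≠ j → f w i ≠ f w j} := by
  have hbad : {w ∈ Ω | ¬ ∀ i ∈ F, ∀ j ∈ F, i ≠ j → f w i ≠ f w j} =
      F.offDiag.biUnion fun p => {w ∈ Ω | f w p.1 = f w p.2} := by
    ext w
    simp only [mem_filter, mem_biUnion, mem_offDiag, Prod.exists]
    push Not
    constructor
    · rintro ⟨hw, i, hi, j, hj, hij, hf⟩
      exact ⟨i, j, ⟨hi, hj, hij⟩, hw, hf⟩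
    · rintro ⟨i, j, ⟨hi, hj, hij⟩, hw, hf⟩
      exact ⟨hw, i, hi, j, hj, hij, hf⟩
  have hunion := card_biUnion_offDiag_le_choose_two_mul F (fun i j => {w ∈ Ω | f w i = f w j})
    (fun _ _ => filter_congr fun _ _ => eq_comm) t ht
  have hsplit := card_filter_add_card_filter_not (s := Ω)
    fun w => ∀ i ∈ F, ∀ j ∈ F, i ≠ j → f w i ≠ f w j
  rw [hbad] at hsplit
  have := congrArg (Nat.cast (R := ℝ)) hsplit
  push_cast at this
  linarith

/-- Randomized Separation Lemma: with probability at least `1 - C(|F|,2)/M`,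
random weights uniform on `{1,...,M}` give all sets of `F` pairwise distinct
total weights. Probability is modelled by counting weight functions in the
finite sample space of all functions `α → {1,...,M}`. -/
theorem randomized_separation_lemma {α : Type*} [Fintype α] [DecidableEq α]
    (F : Finset (Finset α)) (M : ℕ) (hM : 0 < M) :
    ((1 : ℝ) - (F.card.choose 2 : ℝ) / (M : ℝ)) *
        ((Fintype.piFinset fun _ : α => Finset.Icc 1 M).card : ℝ) ≤
      (((Fintype.piFinset fun _ : α => Finset.Icc 1 M).filter fun w =>
          ∀ S₁ ∈ F, ∀ S₂ ∈ F, S₁ ≠ S₂ →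
            ∑ x ∈ S₁, w x ≠ ∑ x ∈ S₂, w x).card : ℝ) := by
  set Ω := Fintype.piFinset fun _ : α => Icc 1 M
  have hcollision : ∀ S₁ ∈ F, ∀ S₂ ∈ F, S₁ ≠ S₂ →
      (#{w ∈ Ω | ∑ x ∈ S₁, w x = ∑ x ∈ S₂, w x} : ℝ) ≤ #Ω / M := by
    intro S₁ _ S₂ _ hS
    have := card_mul_card_filter_sum_eq_le (Icc 1 M) hS
    rw [Nat.card_Icc, Nat.add_sub_cancel] at this
    rw [le_div_iff₀ (by exact_mod_cast hM), mul_comm]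
    exact_mod_cast this
  rw [sub_mul, one_mul, div_mul_eq_mul_div, mul_div_assoc]
  convert card_sub_choose_two_mul_le_card_filter_pairwise_ne Ω F
    (fun w S => ∑ x ∈ S, w x) _ hcollision
end

section
/- Let X be a finite set with |X| = n and let F be a family of subsets of X. Then there exists an assignment of positive integer weights w : X → {1, 2, ..., γ²|F|²}, where γ is the maximum cardinality of a set in F, such that for all distinct S1, S2 ∈ F, the total weight of S1 differs from the total weight of S2. -/
/-!
Union bound over pairs. For distinct `S₁, S₂` pick `x ∈ S₁ ∆ S₂`: among the assignments
`α → A` under which `S₁` and `S₂` have equal weight, the values off `x` determine the value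
at `x`, so at most a `1 / #A` fraction of all assignments make this pair collide. Fewer than
`#A` ordered pairs therefore cannot exhaust all assignments.
-/

open Finset
open scoped symmDiff

theorem apply_eq_of_sum_eq_sum {α β : Type*} [DecidableEq α] [AddCancelCommMonoid β]
    {S₁ S₂ : Finset α} {x : α} (hx₁ : x ∈ S₁) (hx₂ : x ∉ S₂) {w w' : α → β}
    (hoff : ∀ y ≠ x, w y = w' y) (hw : ∑ y ∈ S₁, w y = ∑ y ∈ S₂, w y)
    (hw' : ∑ y ∈ S₁, w' y = ∑ y ∈ S₂, w' y) : w x = w' x := by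
  have hS₂ : ∑ y ∈ S₂, w y = ∑ y ∈ S₂, w' y :=
    sum_congr rfl fun y hy => hoff y (ne_of_mem_of_not_mem hy hx₂)
  have hrest : ∑ y ∈ S₁.erase x, w y = ∑ y ∈ S₁.erase x, w' y :=
    sum_congr rfl fun y hy => hoff y (ne_of_mem_erase hy)
  apply add_right_cancel (b := ∑ y ∈ S₁.erase x, w y)
  rw [add_sum_erase _ _ hx₁, hrest, add_sum_erase _ _ hx₁, hw, hw', hS₂]

theorem eq_of_sum_eq_sum_of_eqOn_ne {α β : Type*} [DecidableEq α] [AddCancelCommMonoid β]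
    {S₁ S₂ : Finset α} {x : α} (hx : x ∈ S₁ ∆ S₂) {w w' : α → β}
    (hoff : ∀ y ≠ x, w y = w' y) (hw : ∑ y ∈ S₁, w y = ∑ y ∈ S₂, w y)
    (hw' : ∑ y ∈ S₁, w' y = ∑ y ∈ S₂, w' y) : w = w' := by
  funext y
  obtain rfl | hy := eq_or_ne y x
  · rcases mem_symmDiff.mp hx with ⟨hx₁, hx₂⟩ | ⟨hx₂, hx₁⟩
    · exact apply_eq_of_sum_eq_sum hx₁ hx₂ hoff hw hw'
    · exact apply_eq_of_sum_eq_sum hx₂ hx₁ hoff hw.symm hw'.symm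
  · exact hoff y hy

theorem card_mul_card_filter_sum_eq_sum_le {α β : Type*} [Fintype α] [DecidableEq α]
    [AddCancelCommMonoid β] [DecidableEq β] {S₁ S₂ : Finset α} (h : S₁ ≠ S₂) (A : Finset β) :
    #A * #{w ∈ Fintype.piFinset fun _ : α => A | ∑ y ∈ S₁, w y = ∑ y ∈ S₂, w y} ≤
      #A ^ Fintype.card α := by
  obtain ⟨x, hx⟩ := symmDiff_nonempty.mpr h
  have hinj : #{w ∈ Fintype.piFinset fun _ : α => A | ∑ y ∈ S₁, w y = ∑ y ∈ S₂, w y} ≤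
      #(Fintype.piFinset fun _ : {y // y ≠ x} => A) := by
    refine card_le_card_of_injOn (fun w y => w y) (fun w hw => ?_) fun w hw w' hw' heq => ?_
    · simp_all [Fintype.mem_piFinset]
    · simp only [coe_filter, Set.mem_ofPred_eq] at hw hw'
      exact eq_of_sum_eq_sum_of_eqOn_ne hx (fun y hy => congrFun heq ⟨y, hy⟩) hw.2 hw'.2
  have hcard : Fintype.card α = Fintype.card {y // y ≠ x} + 1 := by
    have := Fintype.card_pos_iff.mpr ⟨x⟩
    simp only [Fintype.card_subtype_compl, Fintype.card_unique]
    omega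
  rw [Fintype.card_piFinset, prod_const, card_univ] at hinj
  rw [hcard, pow_succ']
  exact Nat.mul_le_mul_left _ hinj

theorem exists_mem_piFinset_injOn_sum {α β : Type*} [Fintype α] [DecidableEq α]
    [AddCancelCommMonoid β] [DecidableEq β] (F : Finset (Finset α)) (A : Finset β)
    (hA : #F * (#F - 1) < #A) :
    ∃ w ∈ Fintype.piFinset fun _ : α => A, Set.InjOn (fun S => ∑ x ∈ S, w x) F := by
  set W := Fintype.piFinset fun _ : α => A
  set collide : Finset α × Finset α → Finset (α → β) :=
    fun p => {w ∈ W | ∑ y ∈ p.1, w y = ∑ y ∈ p.2, w y}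
  have hWcard : #W = #A ^ Fintype.card α := by simp [W]
  have hW : 0 < #W := hWcard ▸ pow_pos (hA.trans_le' (Nat.zero_le _)) _
  have hbad : #(F.offDiag.biUnion collide) < #W := by
    refine Nat.lt_of_mul_lt_mul_left (a := #A) ?_
    calc #A * #(F.offDiag.biUnion collide)
        ≤ ∑ p ∈ F.offDiag, #A * #(collide p) := by
          rw [← mul_sum]
          exact Nat.mul_le_mul_left _ card_biUnion_le
      _ ≤ ∑ p ∈ F.offDiag, #W :=
          sum_le_sum fun p hp =>
            (card_mul_card_filter_sum_eq_sum_le (mem_offDiag.mp hp).2.2 A).trans_eq hWcard.symm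
      _ = #F * (#F - 1) * #W := by rw [sum_const, smul_eq_mul, offDiag_card, Nat.mul_sub_one]
      _ < #A * #W := Nat.mul_lt_mul_of_pos_right hA hW
  obtain ⟨w, hw, hgood⟩ := not_subset.mp fun hsub => (card_le_card hsub).not_gt hbad
  refine ⟨w, hw, fun S₁ h₁ S₂ h₂ heq => by_contra fun hne => hgood ?_⟩
  exact mem_biUnion.mpr ⟨(S₁, S₂), mem_offDiag.mpr ⟨h₁, h₂, hne⟩, mem_filter.mpr ⟨hw, heq⟩⟩

theorem deterministic_separation_lemma_general {α : Type*} [Fintype α]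
    (F : Finset (Finset α)) (hγ : 1 ≤ F.sup Finset.card) :
    ∃ w : α → ℕ,
      (∀ x : α, w x ∈ Finset.Icc 1 ((F.sup Finset.card) ^ 2 * F.card ^ 2)) ∧
      ∀ S₁ ∈ F, ∀ S₂ ∈ F, S₁ ≠ S₂ → ∑ x ∈ S₁, w x ≠ ∑ x ∈ S₂, w x := by
  classical
  have hF : 0 < #F := card_pos.mpr (nonempty_of_ne_empty (by rintro rfl; simp at hγ))
  have hpairs : #F * (#F - 1) < #(Icc 1 ((F.sup card) ^ 2 * #F ^ 2)) :=
    calc #F * (#F - 1) < #F ^ 2 := by rw [sq]; exact Nat.mul_lt_mul_of_pos_left (by omega) hF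
      _ ≤ (F.sup card) ^ 2 * #F ^ 2 := Nat.le_mul_of_pos_left _ (by positivity)
      _ = #(Icc 1 ((F.sup card) ^ 2 * #F ^ 2)) := by simp
  obtain ⟨w, hw, hinj⟩ := exists_mem_piFinset_injOn_sum F _ hpairs
  exact ⟨w, Fintype.mem_piFinset.mp hw, fun S₁ h₁ S₂ h₂ hne heq => hne (hinj h₁ h₂ heq)⟩

/-- Deterministic Separation Lemma: there is a weight assignment
`w : X → {1,...,γ²|F|²}` (γ the largest cardinality of a set in `F`)
giving all sets in `F` pairwise distinct total weights. -/
theorem deterministic_separation_lemma {α : Type*} [Fintype α] [DecidableEq α]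
    (F : Finset (Finset α)) (hγ : 1 ≤ F.sup Finset.card) :
    ∃ w : α → ℕ,
      (∀ x : α, w x ∈ Finset.Icc 1 ((F.sup Finset.card) ^ 2 * F.card ^ 2)) ∧
      ∀ S₁ ∈ F, ∀ S₂ ∈ F, S₁ ≠ S₂ → ∑ x ∈ S₁, w x ≠ ∑ x ∈ S₂, w x :=
  deterministic_separation_lemma_general F hγ
end

section
/- Let X = {x_1,...,x_n} be a finite ordered set and F a family of subsets of X. Define F_{≤n} to be the collection of all projections S ∩ {x_1,...,x_i} for S ∈ F and 1 ≤ i ≤ n. Then there exists an assignment of positive integer weights w : X → {1, 2, ..., |F_{≤n}|²} such that all sets in F have pairwise distinct total weights. -/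
/-!
Fix the weights of `x_1, x_2, …` one at a time, keeping the invariant that distinct traces
`S ∩ {x_1, …, x_k}` (`S ∈ F`) have distinct weights. When `x_{k+1}` is added, two traces with
the same membership of `x_{k+1}` stay separated, so a collision can only pair a trace `A`
containing `x_{k+1}` with a trace `B` avoiding it, and it happens exactly when
`w(x_{k+1}) = w(B) - w(A \ {x_{k+1}})`. The traces at level `k + 1` lie in `F_{≤n}`, so if
`p` of them contain `x_{k+1}` and `q` do not, then `p + q ≤ |F_{≤n}|` and there are at most
`pq < |F_{≤n}|²` forbidden values: an admissible weight in `{1, …, |F_{≤n}|²}` exists.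
-/

/-- The family of all projections `S ∩ {x_1,...,x_i}` for `S ∈ F`, `1 ≤ i ≤ n`,
with the ground set ordered as `Fin n`. -/
def projFamily {n : ℕ} (F : Finset (Finset (Fin n))) : Finset (Finset (Fin n)) :=
  F.biUnion fun S => (Finset.univ : Finset (Fin n)).image fun i => S.filter (· ≤ i)

open Finset Function

section Update

variable {α : Type*} [DecidableEq α]

theorem sum_update_eq_sum_erase_add (s : Finset α) (w : α → ℕ) (a : α) (c : ℕ) :
    ∑ x ∈ s, update w a c x = ∑ x ∈ s.erase a, w x + if a ∈ s then c else 0 := by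
  by_cases ha : a ∈ s
  · rw [sum_update_of_mem ha, sdiff_singleton_eq_erase, if_pos ha, add_comm]
  · rw [sum_update_of_notMem ha, erase_eq_of_notMem ha, if_neg ha, add_zero]

theorem exists_update_injOn_sum (G : Finset (Finset α)) (a : α) (w : α → ℕ) {M : ℕ}
    (hw : Set.InjOn (fun S => ∑ x ∈ S, w x) (G.image (·.erase a)))
    (hM : #(G.filter (a ∈ ·)) * #(G.filter (a ∉ ·)) < M) :
    ∃ c ∈ Icc 1 M, Set.InjOn (fun S => ∑ x ∈ S, update w a c x) G := by
  set forbidden := image₂ (fun A B => ∑ x ∈ B, w x - ∑ x ∈ A.erase a, w x)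
    (G.filter (a ∈ ·)) (G.filter (a ∉ ·))
  have hcard : #forbidden < #(Icc 1 M) :=
    (card_image₂_le _ _ _).trans_lt (by rwa [Nat.card_Icc, Nat.add_sub_cancel])
  obtain ⟨c, hc, hcf⟩ := exists_mem_notMem_of_card_lt_card hcard
  have hc1 : 1 ≤ c := (mem_Icc.mp hc).1
  refine ⟨c, hc, fun S hS T hT heq => ?_⟩
  simp only [sum_update_eq_sum_erase_add] at heq
  have not_mixed : ∀ A ∈ G, ∀ B ∈ G, a ∈ A → a ∉ B →
      ∑ x ∈ A.erase a, w x + c ≠ ∑ x ∈ B.erase a, w x := by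
    intro A hA B hB haA haB h
    rw [erase_eq_of_notMem haB] at h
    exact hcf (mem_image₂.mpr ⟨A, mem_filter.mpr ⟨hA, haA⟩, B, mem_filter.mpr ⟨hB, haB⟩, by omega⟩)
  have hmem : a ∈ S ↔ a ∈ T := by
    by_cases haS : a ∈ S <;> by_cases haT : a ∈ T <;>
      simp only [haS, haT, if_true, if_false] at heq
    · exact iff_of_true haS haT
    · exact (not_mixed S hS T hT haS haT (by omega)).elim
    · exact (not_mixed T hT S hS haT haS (by omega)).elim
    · exact iff_of_false haS haT
  have herase : S.erase a = T.erase a := by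
    refine hw (mem_image_of_mem _ hS) (mem_image_of_mem _ hT) ?_
    simp only [hmem] at heq
    exact Nat.add_right_cancel heq
  ext x
  by_cases hx : x = a
  · rwa [hx]
  · simpa [hx] using congrArg (x ∈ ·) herase

end Update

section Truncation

variable {n : ℕ}

/-- The traces `S ∩ {x_1, …, x_k}` of the sets `S ∈ F`. -/
def truncate (F : Finset (Finset (Fin n))) (k : ℕ) : Finset (Finset (Fin n)) :=
  F.image fun S => S.filter (·.val < k)

theorem truncate_zero_subsingleton (F : Finset (Finset (Fin n))) :
    (truncate F 0 : Set (Finset (Fin n))).Subsingleton := by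
  simp only [truncate, coe_image]
  rintro _ ⟨S, -, rfl⟩ _ ⟨T, -, rfl⟩
  simp

theorem truncate_self (F : Finset (Finset (Fin n))) : truncate F n = F := by
  simp [truncate]

theorem image_erase_truncate_succ (F : Finset (Finset (Fin n))) {k : ℕ} (hk : k < n) :
    (truncate F (k + 1)).image (·.erase ⟨k, hk⟩) = truncate F k := by
  simp only [truncate, image_image]
  congr 1
  ext S x
  simp only [comp_apply, mem_erase, mem_filter, ne_eq, Fin.ext_iff]
  grind

theorem truncate_succ_subset_projFamily (F : Finset (Finset (Fin n))) {k : ℕ} (hk : k < n) :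
    truncate F (k + 1) ⊆ projFamily F := by
  intro A hA
  obtain ⟨S, hS, rfl⟩ := mem_image.mp hA
  refine mem_biUnion.mpr ⟨S, hS, mem_image.mpr ⟨⟨k, hk⟩, mem_univ _, ?_⟩⟩
  ext x
  simp only [mem_filter, Fin.le_def, Nat.lt_succ_iff]

theorem projFamily_nonempty {F : Finset (Finset (Fin n))} (hF : F.Nonempty) (a : Fin n) :
    (projFamily F).Nonempty :=
  let ⟨S, hS⟩ := hF
  ⟨_, mem_biUnion.mpr ⟨S, hS, mem_image_of_mem (fun i => S.filter (· ≤ i)) (mem_univ a)⟩⟩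

theorem mul_lt_sq_of_add_le {p q m : ℕ} (h : p + q ≤ m) (hm : 1 ≤ m) : p * q < m ^ 2 := by
  nlinarith

theorem exists_weights_injOn_truncate {F : Finset (Finset (Fin n))} (hF : F.Nonempty) :
    ∀ k ≤ n, ∃ w : Fin n → ℕ, (∀ x, w x ∈ Icc 1 (#(projFamily F) ^ 2)) ∧
      Set.InjOn (fun S => ∑ x ∈ S, w x) (truncate F k) := by
  intro k
  induction k with
  | zero =>
    refine fun _ => ⟨fun _ => 1, fun x => ?_, (truncate_zero_subsingleton F).injOn _⟩
    exact mem_Icc.mpr ⟨le_rfl, Nat.one_le_pow _ _ (card_pos.mpr (projFamily_nonempty hF x))⟩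
  | succ k ih =>
    intro hk
    set a : Fin n := ⟨k, hk⟩
    obtain ⟨w, hw, hinj⟩ := ih (by omega)
    rw [← image_erase_truncate_succ F hk] at hinj
    have hsplit := card_filter_add_card_filter_not (s := truncate F (k + 1)) (a ∈ ·)
    obtain ⟨c, hc, hinj'⟩ := exists_update_injOn_sum _ a w hinj <| mul_lt_sq_of_add_le
      (hsplit.trans_le (card_le_card (truncate_succ_subset_projFamily F hk)))
      (card_pos.mpr (projFamily_nonempty hF a))
    refine ⟨update w a c, fun x => ?_, hinj'⟩
    rcases eq_or_ne x a with rfl | hx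
    · rwa [update_self]
    · rw [update_of_ne hx]
      exact hw x

end Truncation

/-- Alternate Deterministic Separation Lemma: weights can be chosen in
`{1,...,|F_{≤n}|²}` so that all sets of `F` have distinct total weights. -/
theorem alternate_deterministic_separation_lemma {n : ℕ}
    (F : Finset (Finset (Fin n))) (hF : F.Nonempty) :
    ∃ w : Fin n → ℕ,
      (∀ x : Fin n, w x ∈ Finset.Icc 1 ((projFamily F).card ^ 2)) ∧
      ∀ S₁ ∈ F, ∀ S₂ ∈ F, S₁ ≠ S₂ → ∑ x ∈ S₁, w x ≠ ∑ x ∈ S₂, w x := by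
  obtain ⟨w, hw, hinj⟩ := exists_weights_injOn_truncate hF n le_rfl
  rw [truncate_self] at hinj
  exact ⟨w, hw, fun S₁ hS₁ S₂ hS₂ hne heq => hne (hinj hS₁ hS₂ heq)⟩
end

section
/- Let X = {x_1,...,x_n} be a finite ordered set, F a family of subsets of X, and for 1 ≤ i ≤ n let F_{≤i} = { S ∩ {x_1,...,x_j} : S ∈ F, 1 ≤ j ≤ i }. Suppose weights w(x_1),...,w(x_i) have been assigned so that all sets in F_{≤i} have distinct total weights. If w(x_{i+1}) is any positive integer that is neither the weight of any set in F_{≤i} nor the absolute difference of weights of any two distinct sets in F_{≤i}, then all sets in F_{≤i+1} have distinct total weights. -/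
/-!
Deleting `x_{i+1}` maps `F_{≤i+1}` into `F_{≤i}` (the trace `S ∩ {x_1,...,x_k}` becomes
`S ∩ {x_1,...,x_{min k i}}`), and it lowers the weight of a set by `w(x_{i+1})` or by nothing.
If two distinct sets of `F_{≤i+1}` had equal weight and only one of them contained `x_{i+1}`,
then `w(x_{i+1})` would be `0` or the difference of the weights of two distinct sets of
`F_{≤i}`; if both or neither contain it, their traces on `F_{≤i}` are distinct with equal weight.
-/

/-- The family `F_{≤i}` of projections `S ∩ {x_1,...,x_j}` for `S ∈ F` and `j ≤ i`. -/
def projFamilyUpTo {n : ℕ} (F : Finset (Finset (Fin n))) (i : Fin n) :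
    Finset (Finset (Fin n)) :=
  F.biUnion fun S => (Finset.Iic i).image fun k => S.filter (· ≤ k)

open Finset

theorem erase_mem_projFamilyUpTo {n : ℕ} {F : Finset (Finset (Fin n))} {i j : Fin n}
    (hij : i ⋖ j) {A : Finset (Fin n)} (hA : A ∈ projFamilyUpTo F j) :
    A.erase j ∈ projFamilyUpTo F i := by
  simp only [projFamilyUpTo, mem_biUnion, mem_image, mem_Iic] at hA ⊢
  obtain ⟨S, hS, k, hkj, rfl⟩ := hA
  refine ⟨S, hS, min k i, min_le_right k i, ?_⟩
  ext x
  have hx : x < j ↔ x ≤ i := hij.lt_iff_le_left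
  simp only [mem_filter, mem_erase, le_min_iff, ← hx]
  grind

section

variable {α : Type*} [DecidableEq α] {𝒢 : Finset (Finset α)} {w : α → ℕ} {j : α}

theorem sum_insert_ne_sum_of_notMem (hwj : 0 < w j)
    (hnotdiff : ∀ A ∈ 𝒢, ∀ B ∈ 𝒢, A ≠ B →
      (w j : ℤ) ≠ |(∑ x ∈ A, (w x : ℤ)) - ∑ x ∈ B, (w x : ℤ)|)
    {A B : Finset α} (hA : A ∈ 𝒢) (hB : B ∈ 𝒢) (hjA : j ∉ A) :
    ∑ x ∈ insert j A, w x ≠ ∑ x ∈ B, w x := by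
  rw [sum_insert hjA]
  intro hsum
  obtain rfl | hAB := eq_or_ne A B
  · omega
  refine hnotdiff B hB A hA hAB.symm ?_
  have hsumZ : (w j : ℤ) + ∑ x ∈ A, (w x : ℤ) = ∑ x ∈ B, (w x : ℤ) := by exact_mod_cast hsum
  rw [← hsumZ, add_sub_cancel_right, abs_of_pos (by exact_mod_cast hwj)]

theorem sum_ne_sum_of_erase_mem (hwj : 0 < w j)
    (hdist : ∀ A ∈ 𝒢, ∀ B ∈ 𝒢, A ≠ B → ∑ x ∈ A, w x ≠ ∑ x ∈ B, w x)
    (hnotdiff : ∀ A ∈ 𝒢, ∀ B ∈ 𝒢, A ≠ B →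
      (w j : ℤ) ≠ |(∑ x ∈ A, (w x : ℤ)) - ∑ x ∈ B, (w x : ℤ)|)
    {A B : Finset α} (hA : A.erase j ∈ 𝒢) (hB : B.erase j ∈ 𝒢) (hAB : A ≠ B) :
    ∑ x ∈ A, w x ≠ ∑ x ∈ B, w x := by
  by_cases hjA : j ∈ A <;> by_cases hjB : j ∈ B
  · rw [← insert_erase hjA, ← insert_erase hjB, sum_insert (notMem_erase j A),
      sum_insert (notMem_erase j B), Ne, add_right_inj]
    exact hdist _ hA _ hB fun h => hAB (by rw [← insert_erase hjA, h, insert_erase hjB])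
  · rw [erase_eq_of_notMem hjB] at hB
    rw [← insert_erase hjA]
    exact sum_insert_ne_sum_of_notMem hwj hnotdiff hA hB (notMem_erase j A)
  · rw [erase_eq_of_notMem hjA] at hA
    rw [← insert_erase hjB]
    exact (sum_insert_ne_sum_of_notMem hwj hnotdiff hB hA (notMem_erase j B)).symm
  · rw [erase_eq_of_notMem hjA] at hA
    rw [erase_eq_of_notMem hjB] at hB
    exact hdist A hA B hB hAB

end

theorem separation_inductive_step_general {n : ℕ} (F : Finset (Finset (Fin n)))
    (w : Fin n → ℕ) (hw : ∀ x, 0 < w x) (i j : Fin n) (hij : (j : ℕ) = (i : ℕ) + 1)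
    (hdist : ∀ A ∈ projFamilyUpTo F i, ∀ B ∈ projFamilyUpTo F i,
      A ≠ B → ∑ x ∈ A, w x ≠ ∑ x ∈ B, w x)
    (hnotdiff : ∀ A ∈ projFamilyUpTo F i, ∀ B ∈ projFamilyUpTo F i, A ≠ B →
      (w j : ℤ) ≠ |(∑ x ∈ A, (w x : ℤ)) - ∑ x ∈ B, (w x : ℤ)|) :
    ∀ A ∈ projFamilyUpTo F j, ∀ B ∈ projFamilyUpTo F j,
      A ≠ B → ∑ x ∈ A, w x ≠ ∑ x ∈ B, w x := by
  have hcov : i ⋖ j := Fin.covBy_iff.2 (Nat.covBy_iff_add_one_eq.2 hij.symm)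
  intro A hA B hB hAB
  exact sum_ne_sum_of_erase_mem (hw j) hdist hnotdiff (erase_mem_projFamilyUpTo hcov hA)
    (erase_mem_projFamilyUpTo hcov hB) hAB

/-- Inductive step of the Deterministic Separation Lemma: if all sets of
`F_{≤i}` have distinct weights and `w(x_{i+1})` is a positive integer which is
neither the weight of a set in `F_{≤i}` nor the absolute difference of the
weights of two distinct sets in `F_{≤i}`, then all sets in `F_{≤i+1}` have
distinct weights. -/
theorem separation_inductive_step {n : ℕ} (F : Finset (Finset (Fin n)))
    (w : Fin n → ℕ) (hw : ∀ x, 0 < w x) (i j : Fin n) (hij : (j : ℕ) = (i : ℕ) + 1)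
    (hdist : ∀ A ∈ projFamilyUpTo F i, ∀ B ∈ projFamilyUpTo F i,
      A ≠ B → ∑ x ∈ A, w x ≠ ∑ x ∈ B, w x)
    (hnotweight : ∀ A ∈ projFamilyUpTo F i, (w j : ℤ) ≠ ∑ x ∈ A, (w x : ℤ))
    (hnotdiff : ∀ A ∈ projFamilyUpTo F i, ∀ B ∈ projFamilyUpTo F i, A ≠ B →
      (w j : ℤ) ≠ |(∑ x ∈ A, (w x : ℤ)) - ∑ x ∈ B, (w x : ℤ)|) :
    ∀ A ∈ projFamilyUpTo F j, ∀ B ∈ projFamilyUpTo F j,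
      A ≠ B → ∑ x ∈ A, w x ≠ ∑ x ∈ B, w x :=
  separation_inductive_step_general F w hw i j hij hdist hnotdiff
end

section
/- Let X = {x_1,...,x_n} be a finite totally ordered set and let I be the family of all intervals of X. Then there exists an assignment of positive integer weights w : X → {1, 2, ..., |I|²} (in particular with |I|² ≤ n⁴) such that for all distinct intervals I_1, I_2 ∈ I, w(I_1) ≠ w(I_2). -/
/-!
Give the `i`-th point (counting from `0`) the weight `1 + (n + 1) i`. The weight of an interval
is then `|I| + (n + 1) Σ_{i ∈ I} i` with `|I| ≤ n < n + 1`, so reading it in base `n + 1` recovers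
both the length of the interval and the sum of its indices; for a fixed length, that sum is
strictly increasing in the left endpoint. The weights are at most `1 + (n + 1)(n - 1) = n²`, and
there are between `n` and `n²` intervals.
-/

open Finset

theorem Finset.card_eq_and_sum_eq_of_sum_one_add_mul_eq {ι : Type*} {s t : Finset ι}
    {f : ι → ℕ} {m : ℕ} (hs : #s < m) (ht : #t < m)
    (h : ∑ x ∈ s, (1 + m * f x) = ∑ x ∈ t, (1 + m * f x)) :
    #s = #t ∧ ∑ x ∈ s, f x = ∑ x ∈ t, f x := by
  have expand (u : Finset ι) : ∑ x ∈ u, (1 + m * f x) = #u + m * ∑ x ∈ u, f x := by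
    rw [sum_add_distrib, ← mul_sum, card_eq_sum_ones]
  rw [expand, expand] at h
  have hm : 0 < m := Nat.zero_lt_of_lt hs
  obtain ⟨hdiv_s, hmod_s⟩ := (Nat.div_mod_unique hm).2 ⟨rfl, hs⟩
  obtain ⟨hdiv_t, hmod_t⟩ := (Nat.div_mod_unique hm).2 ⟨h.symm, ht⟩
  exact ⟨hmod_s.symm.trans hmod_t, hdiv_s.symm.trans hdiv_t⟩

theorem Nat.sum_Icc_id (a b : ℕ) :
    ∑ i ∈ Icc a b, i = (b + 1 - a) * a + ∑ i ∈ range (b + 1 - a), i := by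
  rw [← Ico_add_one_right_eq_Icc, sum_Ico_eq_sum_range, sum_add_distrib, sum_const, card_range,
    smul_eq_mul]

theorem Nat.Icc_eq_Icc_of_card_eq_of_sum_eq {a b c d : ℕ} (hcard : #(Icc a b) = #(Icc c d))
    (hsum : ∑ i ∈ Icc a b, i = ∑ i ∈ Icc c d, i) : Icc a b = Icc c d := by
  rw [Nat.card_Icc, Nat.card_Icc] at hcard
  rw [Nat.sum_Icc_id, Nat.sum_Icc_id, hcard, add_left_inj] at hsum
  rcases Nat.eq_zero_or_pos (d + 1 - c) with hempty | hpos
  · rw [Icc_eq_empty (by omega), Icc_eq_empty (by omega)]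
  · obtain rfl : a = c := Nat.eq_of_mul_eq_mul_left hpos hsum
    obtain rfl : b = d := by omega
    rfl

theorem Fin.Icc_eq_Icc_of_card_eq_of_sum_val_eq {n : ℕ} {a b c d : Fin n}
    (hcard : #(Icc a b) = #(Icc c d))
    (hsum : ∑ i ∈ Icc a b, (i : ℕ) = ∑ i ∈ Icc c d, (i : ℕ)) : Icc a b = Icc c d := by
  rw [← map_inj (f := Fin.valEmbedding), Fin.map_valEmbedding_Icc, Fin.map_valEmbedding_Icc]
  apply Nat.Icc_eq_Icc_of_card_eq_of_sum_eq
  · rwa [← Fin.map_valEmbedding_Icc, ← Fin.map_valEmbedding_Icc, card_map, card_map]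
  · rwa [← Fin.map_valEmbedding_Icc, ← Fin.map_valEmbedding_Icc, sum_map, sum_map]

def Fin.intervals (n : ℕ) : Finset (Finset (Fin n)) :=
  ((univ : Finset (Fin n × Fin n)).filter fun p => p.1 ≤ p.2).image fun p => Icc p.1 p.2

theorem Fin.card_intervals_le (n : ℕ) : #(Fin.intervals n) ≤ n ^ 2 :=
  calc #(Fin.intervals n) ≤ #((univ : Finset (Fin n × Fin n)).filter fun p => p.1 ≤ p.2) :=
        card_image_le
    _ ≤ #(univ : Finset (Fin n × Fin n)) := card_filter_le _ _
    _ = n ^ 2 := by simp [sq]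

theorem Fin.le_card_intervals (n : ℕ) : n ≤ #(Fin.intervals n) := by
  have hsingle : #(univ : Finset (Fin n)) ≤ #(Fin.intervals n) := by
    refine card_le_card_of_injOn (fun i => Icc i i) (fun i _ => ?_) (fun i _ j _ hij => ?_)
    · exact mem_image.2 ⟨(i, i), by simp, rfl⟩
    · simpa using hij
  simpa using hsingle

theorem Fin.exists_mem_intervals {n : ℕ} {I : Finset (Fin n)} (hI : I ∈ Fin.intervals n) :
    ∃ a b : Fin n, I = Icc a b := by
  obtain ⟨p, -, rfl⟩ := mem_image.1 hI
  exact ⟨p.1, p.2, rfl⟩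

theorem Fin.one_add_succ_mul_val_le_sq {n : ℕ} (x : Fin n) : 1 + (n + 1) * (x : ℕ) ≤ n ^ 2 := by
  have hx : (x : ℕ) + 1 ≤ n := x.2
  nlinarith

/-- Deterministic Separation Lemma for intervals: weights in `{1,...,|I|²}`
(with `|I|² ≤ n⁴`) can be chosen so that all intervals get pairwise distinct
total weights. -/
theorem deterministic_separation_intervals (n : ℕ) :
    (((Finset.univ : Finset (Fin n × Fin n)).filter fun p => p.1 ≤ p.2).image
          fun p => Finset.Icc p.1 p.2).card ^ 2 ≤ n ^ 4 ∧
      ∃ w : Fin n → ℕ,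
        (∀ x : Fin n, w x ∈ Finset.Icc 1
          ((((Finset.univ : Finset (Fin n × Fin n)).filter fun p => p.1 ≤ p.2).image
              fun p => Finset.Icc p.1 p.2).card ^ 2)) ∧
        ∀ I₁ ∈ (((Finset.univ : Finset (Fin n × Fin n)).filter fun p => p.1 ≤ p.2).image
              fun p => Finset.Icc p.1 p.2),
          ∀ I₂ ∈ (((Finset.univ : Finset (Fin n × Fin n)).filter fun p => p.1 ≤ p.2).image
              fun p => Finset.Icc p.1 p.2),
            I₁ ≠ I₂ → ∑ x ∈ I₁, w x ≠ ∑ x ∈ I₂, w x := by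
  change #(Fin.intervals n) ^ 2 ≤ n ^ 4 ∧ ∃ w : Fin n → ℕ,
    (∀ x, w x ∈ Icc 1 (#(Fin.intervals n) ^ 2)) ∧
    ∀ I₁ ∈ Fin.intervals n, ∀ I₂ ∈ Fin.intervals n, I₁ ≠ I₂ → ∑ x ∈ I₁, w x ≠ ∑ x ∈ I₂, w x
  refine ⟨by simpa [← pow_mul] using Nat.pow_le_pow_left (Fin.card_intervals_le n) 2,
    fun x => 1 + (n + 1) * x, fun x => mem_Icc.2 ⟨le_add_right le_rfl, ?_⟩, ?_⟩
  · exact (Fin.one_add_succ_mul_val_le_sq x).trans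
      (Nat.pow_le_pow_left (Fin.le_card_intervals n) 2)
  · intro I₁ hI₁ I₂ hI₂ hne hsum
    obtain ⟨a, b, rfl⟩ := Fin.exists_mem_intervals hI₁
    obtain ⟨c, d, rfl⟩ := Fin.exists_mem_intervals hI₂
    have hsmall (I : Finset (Fin n)) : #I < n + 1 :=
      Nat.lt_succ_of_le (by simpa using card_le_univ I)
    obtain ⟨hcard, hsum_val⟩ :=
      card_eq_and_sum_eq_of_sum_one_add_mul_eq (hsmall _) (hsmall _) hsum
    exact hne (Fin.Icc_eq_Icc_of_card_eq_of_sum_val_eq hcard hsum_val)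
end

section
/- Let T = (V, E) be a tree on n vertices. There exists an assignment of positive integer weights w : E → {1, 2, ..., C·n⁶} (for an absolute constant C) such that any two distinct simple paths P_1, P_2 in T have distinct total edge-weights: Σ_{e∈P_1} w(e) ≠ Σ_{e∈P_2} w(e). -/
/-!
Union bound over pairs of sets: for a pair `A ≠ B` pick `e ∈ A ∆ B`; once the weights off `e` are
fixed, at most one value of `w e` makes the two sums equal, so at most `N ^ (|E| - 1)` of the
`N ^ |E|` weight functions `E → [1, N]` fail to separate the pair. With fewer than `N` pairs some
weight function separates all of them.

In a tree a path is determined by its endpoints, so there are at most `n ^ 2` path edge sets and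
fewer than `n ^ 6` pairs of them. Two nontrivial paths with the same edge set have the same
endpoints, as the endpoints are the vertices of degree one in the path.
-/
open Finset SimpleGraph

section Separation

variable {α : Type*} [DecidableEq α]

theorem eq_of_eqOn_compl_of_sum_eq {A B : Finset α} {e : α} (heA : e ∈ A) (heB : e ∉ B)
    {w₁ w₂ : α → ℕ} (hoff : ∀ a, a ≠ e → w₁ a = w₂ a)
    (h₁ : ∑ a ∈ A, w₁ a = ∑ a ∈ B, w₁ a) (h₂ : ∑ a ∈ A, w₂ a = ∑ a ∈ B, w₂ a) : w₁ = w₂ := by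
  funext a
  by_cases hae : a = e
  · subst hae
    have hB : ∑ b ∈ B, w₁ b = ∑ b ∈ B, w₂ b :=
      sum_congr rfl fun b hb => hoff b (ne_of_mem_of_not_mem hb heB)
    have hA : ∑ b ∈ A.erase a, w₁ b = ∑ b ∈ A.erase a, w₂ b :=
      sum_congr rfl fun b hb => hoff b (ne_of_mem_erase hb)
    rw [← add_sum_erase A _ heA] at h₁ h₂
    omega
  · exact hoff a hae

variable [Fintype α] {N : ℕ}

theorem card_filter_sum_eq_sum_le {A B : Finset α} {e : α} (heA : e ∈ A) (heB : e ∉ B) :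
    N * #{w ∈ Fintype.piFinset fun _ : α => Icc 1 N | ∑ a ∈ A, w a = ∑ a ∈ B, w a}
      ≤ N ^ Fintype.card α := by
  have hrestrict :
      #{w ∈ Fintype.piFinset fun _ : α => Icc 1 N | ∑ a ∈ A, w a = ∑ a ∈ B, w a}
        ≤ #(Fintype.piFinset fun _ : {a // a ≠ e} => Icc 1 N) := by
    refine card_le_card_of_injOn (fun w a => w a) (fun w hw => ?_) (fun w₁ hw₁ w₂ hw₂ h => ?_)
    · exact Fintype.mem_piFinset.2 fun a => Fintype.mem_piFinset.1 (mem_filter.1 hw).1 a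
    · exact eq_of_eqOn_compl_of_sum_eq heA heB (fun a ha => congrFun h ⟨a, ha⟩)
        (mem_filter.1 hw₁).2 (mem_filter.1 hw₂).2
  have hcard : Fintype.card α = Fintype.card {a // a ≠ e} + 1 := by
    rw [Fintype.card_subtype_compl, Fintype.card_subtype_eq]
    have := Fintype.card_pos_iff.2 ⟨e⟩
    omega
  calc N * #_ ≤ N * #(Fintype.piFinset fun _ : {a // a ≠ e} => Icc 1 N) := by gcongr
    _ = N ^ Fintype.card α := by
      rw [Fintype.card_piFinset, prod_const, Nat.card_Icc, Nat.add_sub_cancel, card_univ, hcard,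
        pow_succ']

theorem card_filter_sum_eq_sum_le_of_ne {A B : Finset α} (hAB : A ≠ B) :
    N * #{w ∈ Fintype.piFinset fun _ : α => Icc 1 N | ∑ a ∈ A, w a = ∑ a ∈ B, w a}
      ≤ N ^ Fintype.card α := by
  obtain ⟨e, he⟩ := not_forall.1 (mt Finset.ext hAB)
  by_cases heA : e ∈ A
  · exact card_filter_sum_eq_sum_le heA (fun heB => he (iff_of_true heA heB))
  · simp_rw [eq_comm (a := ∑ a ∈ A, _)]
    exact card_filter_sum_eq_sum_le (by tauto) heA

theorem exists_weights_sum_ne {ι : Type*} (T : Finset ι) (A B : ι → Finset α)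
    (hAB : ∀ i ∈ T, A i ≠ B i) (hT : #T < N) :
    ∃ w : α → ℕ, (∀ a, w a ∈ Icc 1 N) ∧ ∀ i ∈ T, ∑ a ∈ A i, w a ≠ ∑ a ∈ B i, w a := by
  set W := Fintype.piFinset fun _ : α => Icc 1 N
  set bad := T.biUnion fun i => {w ∈ W | ∑ a ∈ A i, w a = ∑ a ∈ B i, w a}
  have hbad : N * #bad < N * #W := by
    calc N * #bad ≤ N * ∑ i ∈ T, #{w ∈ W | ∑ a ∈ A i, w a = ∑ a ∈ B i, w a} := by
          gcongr; exact card_biUnion_le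
      _ ≤ ∑ _i ∈ T, N ^ Fintype.card α := by
          rw [mul_sum]
          exact sum_le_sum fun i hi => card_filter_sum_eq_sum_le_of_ne (hAB i hi)
      _ < N * #W := by
          rw [sum_const, smul_eq_mul, Fintype.card_piFinset, prod_const, Nat.card_Icc,
            Nat.add_sub_cancel, card_univ]
          exact Nat.mul_lt_mul_of_pos_right hT (pow_pos (by omega) _)
  obtain ⟨w, hwW, hwbad⟩ := exists_mem_notMem_of_card_lt_card (lt_of_mul_lt_mul_left hbad N.zero_le)
  refine ⟨w, Fintype.mem_piFinset.1 hwW, fun i hi hsum => hwbad ?_⟩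
  exact mem_biUnion.2 ⟨i, hi, mem_filter.2 ⟨hwW, hsum⟩⟩

theorem exists_weights_injOn_sum {ι : Type*} [Fintype ι] (S : ι → Finset α)
    (hN : Fintype.card ι * (Fintype.card ι - 1) < N) :
    ∃ w : α → ℕ, (∀ a, w a ∈ Icc 1 N) ∧ Set.InjOn (fun s => ∑ a ∈ s, w a) (Set.range S) := by
  classical
  have hT : #{x : ι × ι | S x.1 ≠ S x.2} < N := by
    calc #{x : ι × ι | S x.1 ≠ S x.2} ≤ #(univ : Finset ι).offDiag := by
          refine card_le_card fun x hx => ?_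
          simp only [mem_filter, mem_univ, true_and] at hx
          simpa using fun h => hx (congrArg S h)
      _ < N := by rwa [offDiag_card, card_univ, ← Nat.mul_sub_one]
  obtain ⟨w, hw, hne⟩ := exists_weights_sum_ne _ (fun x : ι × ι => S x.1) (fun x => S x.2)
    (fun x hx => (mem_filter.1 hx).2) hT
  refine ⟨w, hw, ?_⟩
  rintro _ ⟨i, rfl⟩ _ ⟨j, rfl⟩ hsum
  by_contra hij
  exact hne (i, j) (by simpa using hij) hsum

end Separation

namespace SimpleGraph.Walk

variable {V : Type*} {G : SimpleGraph V} {u v u' v' : V}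

theorem IsPath.eq_or_eq_of_ncard_neighborSet_toSubgraph_eq_one {p : G.Walk u v} (hp : p.IsPath)
    {x : V} (hx : (p.toSubgraph.neighborSet x).ncard = 1) : x = u ∨ x = v := by
  obtain ⟨y, hy⟩ := Set.ncard_eq_one.1 hx
  have hxy : p.toSubgraph.Adj x y := (Set.ext_iff.1 hy y).2 rfl
  obtain ⟨i, rfl, hi⟩ := mem_support_iff_exists_getVert.1 ((p.mem_verts_toSubgraph).1 hxy.fst_mem)
  rcases Nat.eq_zero_or_pos i with rfl | hi₀
  · exact .inl p.getVert_zero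
  rcases hi.eq_or_lt with rfl | hil
  · exact .inr p.getVert_length
  have := hp.ncard_neighborSet_toSubgraph_internal_eq_two hi₀.ne' hil
  omega

theorem IsPath.sym2_mk_eq_of_edgeSet_eq {p : G.Walk u v} {q : G.Walk u' v'} (hp : p.IsPath)
    (hq : q.IsPath) (hnil : ¬p.Nil) (h : p.edgeSet = q.edgeSet) : s(u, v) = s(u', v') := by
  have hnbr : ∀ x, p.toSubgraph.neighborSet x = q.toSubgraph.neighborSet x := fun x => by
    ext y
    simp only [Subgraph.mem_neighborSet, adj_toSubgraph_iff_mem_edges, ← mem_edgeSet, h]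
  have hu := hq.eq_or_eq_of_ncard_neighborSet_toSubgraph_eq_one
    (by rw [← hnbr, hp.neighborSet_toSubgraph_startpoint hnil, Set.ncard_singleton])
  have hv := hq.eq_or_eq_of_ncard_neighborSet_toSubgraph_eq_one
    (by rw [← hnbr, hp.neighborSet_toSubgraph_endpoint hnil, Set.ncard_singleton])
  have huv : u ≠ v := by
    rintro rfl
    exact hnil (isPath_iff_nil.1 hp)
  rcases hu with rfl | rfl <;> rcases hv with rfl | rfl <;> simp_all [Sym2.eq_swap]

end SimpleGraph.Walk

theorem SimpleGraph.IsTree.eq_bypass_some {V : Type*} [DecidableEq V] {G : SimpleGraph V}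
    (hG : G.IsTree) {u v : V} {p : G.Walk u v} (hp : p.IsPath) :
    p = (hG.connected.preconnected u v).some.bypass :=
  (hG.existsUnique_path u v).unique hp (Walk.bypass_isPath _)

/-- Unique-length paths in trees: every tree on `n` vertices admits edge
weights in `{1,...,n⁶}` under which any two distinct nontrivial simple paths
have distinct total weights. -/
theorem tree_unique_path_weights {V : Type*} [Fintype V] (G : SimpleGraph V)
    (hG : G.IsTree) :
    ∃ w : Sym2 V → ℕ,
      (∀ e ∈ G.edgeSet, w e ∈ Finset.Icc 1 (Fintype.card V ^ 6)) ∧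
      ∀ (u v u' v' : V) (p : G.Walk u v) (q : G.Walk u' v'),
        p.IsPath → q.IsPath → 0 < p.length → 0 < q.length →
        s(u, v) ≠ s(u', v') → (p.edges.map w).sum ≠ (q.edges.map w).sum := by
  classical
  let pathEdges : V × V → Finset (Sym2 V) := fun x =>
    (hG.connected.preconnected x.1 x.2).some.bypass.edges.toFinset
  have hpathEdges {u v : V} {p : G.Walk u v} (hp : p.IsPath) :
      p.edges.toFinset = pathEdges (u, v) := by
    rw [hG.eq_bypass_some hp]
  have hcard : Fintype.card (V × V) * (Fintype.card (V × V) - 1) < Fintype.card V ^ 6 := by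
    have hn : 0 < Fintype.card V := Fintype.card_pos_iff.2 hG.connected.nonempty
    rw [Fintype.card_prod]
    calc _ < Fintype.card V * Fintype.card V * (Fintype.card V * Fintype.card V) :=
          Nat.mul_lt_mul_of_pos_left (Nat.sub_lt (by positivity) one_pos) (by positivity)
      _ = Fintype.card V ^ 4 := by ring
      _ ≤ Fintype.card V ^ 6 := Nat.pow_le_pow_right hn (by norm_num)
  obtain ⟨w, hw, hinj⟩ := exists_weights_injOn_sum pathEdges hcard
  refine ⟨w, fun e _ => hw e, fun u v u' v' p q hp hq hpl _ hne hsum => hne ?_⟩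
  rw [← List.sum_toFinset w hp.isTrail.edges_nodup, ← List.sum_toFinset w hq.isTrail.edges_nodup,
    hpathEdges hp, hpathEdges hq] at hsum
  have hedges := hinj ⟨(u, v), rfl⟩ ⟨(u', v'), rfl⟩ hsum
  rw [← hpathEdges hp, ← hpathEdges hq] at hedges
  refine hp.sym2_mk_eq_of_edgeSet_eq hq (Walk.not_nil_iff_lt_length.2 hpl) (Set.ext fun e => ?_)
  simpa using Finset.ext_iff.1 hedges e
end

section
/- Let X, Y, Z be disjoint sets each of size n and let w assign positive integer weights to elements of X ∪ Y ∪ Z such that all subsets of size at most 3 have pairwise distinct total weights. Suppose the 3n elements are partitioned into n groups, each group paired with a value M − w(t_B) for some triple t_B of size 3, such that the total weight of the small elements in each group equals w(t_B). Then every group contains exactly three small elements. -/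
/-!
A group with at most three elements weighs as much as its triple, so by separation it is that
triple; hence every group has at least three elements. As the `3n` elements are split into `n`
groups, the sizes sum to `3n`, which forces every group to have exactly three.
-/

open Finset

def SumsDistinctUpTo {U M : Type*} [AddCommMonoid M] (w : U → M) (k : ℕ) : Prop :=
  ∀ A B : Finset U, #A ≤ k → #B ≤ k → ∑ x ∈ A, w x = ∑ x ∈ B, w x → A = B

theorem SumsDistinctUpTo.le_card_of_sum_eq {U M : Type*} [AddCommMonoid M] {w : U → M} {k : ℕ}
    (hw : SumsDistinctUpTo w k) {A T : Finset U} (hT : #T = k)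
    (hsum : ∑ x ∈ A, w x = ∑ x ∈ T, w x) : k ≤ #A := by
  by_contra! hA
  have hAT : A = T := hw A T hA.le hT.le hsum
  rw [hAT, hT] at hA
  exact lt_irrefl k hA

theorem Finset.sum_card_eq_card_of_existsUnique_mem {ι U : Type*} [Fintype ι] [Fintype U]
    (g : ι → Finset U) (hg : ∀ u, ∃! i, u ∈ g i) : ∑ i, #(g i) = Fintype.card U := by
  classical
  have hfiber : ∀ u, #{i | u ∈ g i} = 1 := fun u =>
    card_eq_one_iff_existsUnique.2 (by simpa using hg u)
  calc ∑ i, #(g i) = ∑ i, ∑ u, if u ∈ g i then 1 else 0 := by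
        simp only [sum_boole, Nat.cast_id, filter_mem_eq_inter, univ_inter]
    _ = ∑ u, #{i | u ∈ g i} := by rw [sum_comm]; simp only [sum_boole, Nat.cast_id]
    _ = Fintype.card U := by simp [hfiber]

theorem every_group_has_three_elements_general {U : Type*} [Fintype U]
    (n : ℕ) (hcard : Fintype.card U = 3 * n)
    (w : U → ℕ)
    (hsep : ∀ A B : Finset U, A.card ≤ 3 → B.card ≤ 3 →
      ∑ x ∈ A, w x = ∑ x ∈ B, w x → A = B)
    (g : Fin n → Finset U) (hpart : ∀ u : U, ∃! b, u ∈ g b)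
    (t : Fin n → Finset U) (ht : ∀ b, (t b).card = 3)
    (heq : ∀ b, ∑ x ∈ g b, w x = ∑ x ∈ t b, w x) :
    ∀ b, (g b).card = 3 := by
  have hge : ∀ b, 3 ≤ #(g b) := fun b =>
    SumsDistinctUpTo.le_card_of_sum_eq hsep (ht b) (heq b)
  have hsum : ∑ _b : Fin n, 3 = ∑ b, #(g b) := by
    rw [sum_card_eq_card_of_existsUnique_mem g hpart, hcard, sum_const, card_univ,
      Fintype.card_fin, smul_eq_mul, mul_comm]
  intro b
  exact ((sum_eq_sum_iff_of_le fun b _ => hge b).1 hsum b (mem_univ b)).symm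

/-- Second structural lemma of the Bin Filling reduction: if the `3n` small
elements are partitioned into `n` groups, each group's total weight equalling
the weight of some size-3 triple, and all subsets of size at most 3 have
pairwise distinct weights, then every group has exactly three elements. -/
theorem every_group_has_three_elements {U : Type*} [Fintype U] [DecidableEq U]
    (n : ℕ) (hcard : Fintype.card U = 3 * n)
    (w : U → ℕ) (hw : ∀ u, 0 < w u)
    (hsep : ∀ A B : Finset U, A.card ≤ 3 → B.card ≤ 3 →
      ∑ x ∈ A, w x = ∑ x ∈ B, w x → A = B)
    (g : Fin n → Finset U) (hpart : ∀ u : U, ∃! b, u ∈ g b)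
    (t : Fin n → Finset U) (ht : ∀ b, (t b).card = 3)
    (heq : ∀ b, ∑ x ∈ g b, w x = ∑ x ∈ t b, w x) :
    ∀ b, (g b).card = 3 :=
  every_group_has_three_elements_general n hcard w hsep g hpart t ht heq
end
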